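/- arXiv:0806.3256 — 3 statements merged into one kernel-verified Lean document; each statement's English description precedes it below -/
import Mathlib

section
/- Genericity of ξ with respect to the arrangement: let 𝒱 = (V, η, ξ) be a polarized arrangement and let S ⊆ I satisfy H_S ≠ ∅ and |S| < dim V (so that the flat H_S is positive-dimensional). Then ξ is not constant on H_S: there exist x, y ∈ H_S with ξ(x − y) ≠ 0 (the difference x − y lies in V). -/
open Finset

variable {I : Type*} [Fintype I]

/-- The standard dot product on `I → ℝ`. -/
def dot (x y : I → ℝ) : ℝ := ∑ i, x i * y i

/-- The orthogonal complement of a subspace of `I → ℝ` with respect to the standard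
inner product. -/
def perp (V : Submodule ℝ (I → ℝ)) : Submodule ℝ (I → ℝ) where
  carrier := {x | ∀ v ∈ V, dot x v = 0}
  zero_mem' := fun v _ => by simp [dot]
  add_mem' := fun {a b} ha hb v hv => by
    have h : dot (a + b) v = dot a v + dot b v := by
      simp [dot, add_mul, Finset.sum_add_distrib]
    rw [h, ha v hv, hb v hv, add_zero]
  smul_mem' := fun c {a} ha v hv => by
    have h : dot (c • a) v = c * dot a v := by
      simp [dot, Finset.mul_sum, mul_assoc]
    rw [h, ha v hv, mul_zero]

/-- A sign vector: a function `I → ℝ` all of whose values are `+1` or `-1`. -/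
def IsSign (α : I → ℝ) : Prop := ∀ i, α i = 1 ∨ α i = -1

/-- A polarized arrangement `(V, η, ξ)`, where `η ∈ ℝ^I/V` is recorded by an arbitrary
lift `η : I → ℝ` and the covector `ξ ∈ V*` is recorded by an arbitrary vector `ξ : I → ℝ`
with `ξ(v) = ⟨ξ, v⟩` for `v ∈ V`.  Condition (a): every lift of `η` has at least
`|I| - dim V` nonzero coordinates; condition (b): every representative of `ξ` has at
least `dim V` nonzero coordinates. -/
structure PolArr (I : Type*) [Fintype I] where
  V : Submodule ℝ (I → ℝ)
  η : I → ℝ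
  ξ : I → ℝ
  cond_a : ∀ x : I → ℝ, x - η ∈ V →
    Fintype.card I - Module.finrank ℝ V ≤ Set.ncard {i | x i ≠ 0}
  cond_b : ∀ x : I → ℝ, x - ξ ∈ perp V →
    Module.finrank ℝ V ≤ Set.ncard {i | x i ≠ 0}

/-- The chamber `Δ_α ⊆ V_η` determined by a sign vector `α`. -/
def Delta (V : Submodule ℝ (I → ℝ)) (η α : I → ℝ) : Set (I → ℝ) :=
  {x | x - η ∈ V ∧ ∀ i, 0 ≤ α i * x i}

/-- The cone `Σ_α ⊆ V` determined by a sign vector `α`. -/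
def SigCone (V : Submodule ℝ (I → ℝ)) (α : I → ℝ) : Set (I → ℝ) :=
  {x | x ∈ V ∧ ∀ i, 0 ≤ α i * x i}

/-- `α` is feasible if `Δ_α ≠ ∅`. -/
def Feasible (V : Submodule ℝ (I → ℝ)) (η α : I → ℝ) : Prop := (Delta V η α).Nonempty

/-- `α` is bounded if `ξ(Σ_α)` is bounded above. -/
def Bounded (V : Submodule ℝ (I → ℝ)) (ξ α : I → ℝ) : Prop :=
  BddAbove (dot ξ '' SigCone V α)

/-- The flat `H_S = {x ∈ V_η : x_i = 0 for all i ∈ S}`. -/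
def Flat (V : Submodule ℝ (I → ℝ)) (η : I → ℝ) (S : Set I) : Set (I → ℝ) :=
  {x | x - η ∈ V ∧ ∀ i ∈ S, x i = 0}

/-- A basis: a subset `b ⊆ I` with `|b| = dim V` and `H_b ≠ ∅`. -/
def IsBasisSet (V : Submodule ℝ (I → ℝ)) (η : I → ℝ) (b : Finset I) : Prop :=
  b.card = Module.finrank ℝ V ∧ (Flat V η ↑b).Nonempty

/-- `ξ` attains its maximum on `Δ_α` exactly at the point `H_b`. -/
def OptAt (V : Submodule ℝ (I → ℝ)) (η ξ : I → ℝ) (b : Finset I) (α : I → ℝ) : Prop :=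
  ∃ p ∈ Flat V η ↑b, p ∈ Delta V η α ∧ ∀ x ∈ Delta V η α, x ≠ p → dot ξ (x - p) < 0

/-- `α = μ(b)`: the bounded feasible sign vector on whose chamber `ξ` is maximized
exactly at `H_b`. -/
def MuSpec (V : Submodule ℝ (I → ℝ)) (η ξ : I → ℝ) (b : Finset I) (α : I → ℝ) : Prop :=
  Feasible V η α ∧ Bounded V ξ α ∧ OptAt V η ξ b α

/-- The coordinate subspace of vectors vanishing on `S`. -/
def zeroOn (S : Set I) : Submodule ℝ (I → ℝ) where
  carrier := {x | ∀ i ∈ S, x i = 0}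
  zero_mem' := fun i _ => rfl
  add_mem' := fun {a b} ha hb i hi => by simp [Pi.add_apply, ha i hi, hb i hi]
  smul_mem' := fun c {a} ha i hi => by simp [Pi.smul_apply, ha i hi]

/-- **Genericity of `ξ`.**  If the flat `H_S` is nonempty and positive-dimensional
(`|S| < dim V`), then `ξ` is not constant on `H_S`: there are `x, y ∈ H_S` with
`ξ(x - y) ≠ 0`. -/
theorem xi_not_constant_on_flat (A : PolArr I) (S : Finset I)
    (hS : (Flat A.V A.η ↑S).Nonempty) (hcard : S.card < Module.finrank ℝ A.V) :
    ∃ x ∈ Flat A.V A.η ↑S, ∃ y ∈ Flat A.V A.η ↑S, dot A.ξ (x - y) ≠ 0 := by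
  by_contra hcon
  push_neg at hcon
  obtain ⟨p, hp⟩ := hS
  classical
  -- every w in V ⊓ zeroOn S pairs to zero with ξ
  have key : ∀ w, w ∈ A.V → (∀ i ∈ (↑S : Set I), w i = 0) → dot A.ξ w = 0 := by
    intro w hw1 hw2
    have hpw : p + w ∈ Flat A.V A.η ↑S := by
      refine ⟨?_, ?_⟩
      · have h : p + w - A.η = (p - A.η) + w := by abel
        rw [h]; exact A.V.add_mem hp.1 hw1
      · intro i hi; simp [hp.2 i hi, hw2 i hi]
    have h := hcon (p + w) hpw p hp
    simpa using h
  let e : EuclideanSpace ℝ I ≃ₗ[ℝ] (I → ℝ) := WithLp.linearEquiv 2 ℝ (I → ℝ)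
  have einner : ∀ x y : EuclideanSpace ℝ I, (inner ℝ x y : ℝ) = dot (e x) (e y) := by
    intro x y
    simp [PiLp.inner_apply, RCLike.inner_apply, dot, e, mul_comm]
  have dot_comm : ∀ x y : I → ℝ, dot x y = dot y x := by
    intro x y; simp [dot, mul_comm]
  let V' : Submodule ℝ (EuclideanSpace ℝ I) := A.V.comap e.toLinearMap
  let Z' : Submodule ℝ (EuclideanSpace ℝ I) := (zeroOn (↑S : Set I)).comap e.toLinearMap
  have h1 : e.symm A.ξ ∈ (V' ⊓ Z')ᗮ := by
    rw [Submodule.mem_orthogonal]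
    intro u hu
    have hk := key (e u) hu.1 hu.2
    rw [einner]
    simp only [LinearEquiv.apply_symm_apply]
    rw [dot_comm]; exact hk
  have h2 : (V' ⊓ Z')ᗮ = V'ᗮ ⊔ Z'ᗮ := by
    have h3 : V'ᗮᗮ ⊓ Z'ᗮᗮ = (V'ᗮ ⊔ Z'ᗮ)ᗮ := Submodule.inf_orthogonal _ _
    rw [Submodule.orthogonal_orthogonal, Submodule.orthogonal_orthogonal] at h3
    rw [h3, Submodule.orthogonal_orthogonal]
  rw [h2] at h1
  obtain ⟨a, ha, b, hb, hab⟩ := Submodule.mem_sup.mp h1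
  -- the representative q of ξ supported on S
  set q : I → ℝ := e b with hq
  have hsupp : ∀ i, i ∉ S → q i = 0 := by
    intro i hi
    have hmem : e.symm (Pi.single i 1) ∈ Z' := by
      simp only [V', Z', Submodule.mem_comap, LinearEquiv.coe_coe,
        LinearEquiv.apply_symm_apply]
      intro j hj
      have : j ≠ i := by rintro rfl; exact hi hj
      simp [Pi.single_apply, this]
    have h0 : (inner ℝ (e.symm (Pi.single i 1)) b : ℝ) = 0 :=
      (Submodule.mem_orthogonal Z' b).mp hb _ hmem
    rw [einner, LinearEquiv.apply_symm_apply] at h0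
    have : dot (Pi.single i (1:ℝ)) q = q i := by
      simp [dot, Pi.single_apply, ite_mul]
    rw [← hq] at h0
    rw [this] at h0
    exact h0
  have hperp : q - A.ξ ∈ perp A.V := by
    intro v hv
    have hneg : -a ∈ V'ᗮ := Submodule.neg_mem _ ha
    have hd : q - A.ξ = e (-a) := by
      have : b - e.symm A.ξ = -a := by
        rw [← hab]; abel
      calc q - A.ξ = e b - e (e.symm A.ξ) := by rw [LinearEquiv.apply_symm_apply]
        _ = e (b - e.symm A.ξ) := by rw [map_sub]
        _ = e (-a) := by rw [this]
    rw [hd]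
    have hv' : e.symm v ∈ V' := by
      simp only [V', Submodule.mem_comap, LinearEquiv.coe_coe,
        LinearEquiv.apply_symm_apply]
      exact hv
    have h0 : (inner ℝ (e.symm v) (-a) : ℝ) = 0 := by
      have := (Submodule.mem_orthogonal V' (-a)).mp hneg _ hv'
      exact this
    rw [einner, LinearEquiv.apply_symm_apply] at h0
    rw [dot_comm]; exact h0
  have hle := A.cond_b q hperp
  have hsub : {i | q i ≠ 0} ⊆ (↑S : Set I) := by
    intro i hi
    by_contra hiS
    exact hi (hsupp i hiS)
  have : Set.ncard {i | q i ≠ 0} ≤ S.card := by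
    have := Set.ncard_le_ncard hsub S.finite_toSet
    rwa [Set.ncard_coe_finset] at this
  omega
end

section
/- Associativity identity for the convolution algebra: for any finite set I, any sign vectors α, β, γ, δ ∈ {+1,−1}^I, and every i ∈ I, the indicator multiplicities satisfy 1_{S(αβγ)}(i) + 1_{S(αγδ)}(i) = 1_{S(βγδ)}(i) + 1_{S(αβδ)}(i); equivalently, u_{S(αβγ)}·u_{S(αγδ)} = u_{S(βγδ)}·u_{S(αβδ)} as monomials in the polynomial ring ℝ[u_i : i ∈ I], where u_S = ∏_{i∈S} u_i. -/
set_option maxHeartbeats 1000000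


variable {I : Type*} [Fintype I]

open Classical in
/-- The set `S(αβγ) = {i ∈ I : α(i) = γ(i) ≠ β(i)}`, as a finite set. -/
noncomputable def strip (α β γ : I → ℝ) : Finset I :=
  Finset.univ.filter fun i => α i = γ i ∧ α i ≠ β i

open Classical in
/-- **Associativity identity for the convolution algebra:** for all sign vectors
`α, β, γ, δ` and every `i ∈ I`, the indicator multiplicities satisfy
`1_{S(αβγ)}(i) + 1_{S(αγδ)}(i) = 1_{S(βγδ)}(i) + 1_{S(αβδ)}(i)`; equivalently,
`u_{S(αβγ)}·u_{S(αγδ)} = u_{S(βγδ)}·u_{S(αβδ)}` as monomials in `ℝ[u_i : i ∈ I]`. -/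
theorem associativity_identity (α β γ δ : I → ℝ)
    (hα : IsSign α) (hβ : IsSign β) (hγ : IsSign γ) (hδ : IsSign δ) :
    (∀ i : I,
      ((if i ∈ strip α β γ then 1 else 0) + (if i ∈ strip α γ δ then 1 else 0) : ℕ) =
      ((if i ∈ strip β γ δ then 1 else 0) + (if i ∈ strip α β δ then 1 else 0) : ℕ)) ∧
    (∏ i ∈ strip α β γ, MvPolynomial.X i) * (∏ i ∈ strip α γ δ, MvPolynomial.X i) =
      (∏ i ∈ strip β γ δ, MvPolynomial.X (R := ℝ) i) *
        (∏ i ∈ strip α β δ, MvPolynomial.X i) := by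
  have hmem : ∀ (a b c : I → ℝ) (i : I),
      i ∈ strip a b c ↔ (a i = c i ∧ a i ≠ b i) := by
    intro a b c i
    simp [strip]
  have key : ∀ i : I,
      ((i ∈ strip α β γ ∧ ¬ i ∈ strip α γ δ) ∨ (¬ i ∈ strip α β γ ∧ i ∈ strip α γ δ)) ↔
      ((i ∈ strip β γ δ ∧ ¬ i ∈ strip α β δ) ∨ (¬ i ∈ strip β γ δ ∧ i ∈ strip α β δ)) := by
    intro i
    simp only [hmem]
    rcases hα i with h1 | h1 <;> rcases hβ i with h2 | h2 <;>
      rcases hγ i with h3 | h3 <;> rcases hδ i with h4 | h4 <;>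
      simp [h1, h2, h3, h4] <;> norm_num
  have hdis1 : Disjoint (strip α β γ) (strip α γ δ) := by
    rw [Finset.disjoint_left]
    intro i h1 h2
    rw [hmem] at h1 h2
    exact h2.2 h1.1
  have hdis2 : Disjoint (strip β γ δ) (strip α β δ) := by
    rw [Finset.disjoint_left]
    intro i h1 h2
    rw [hmem] at h1 h2
    exact h2.2 (h2.1.trans h1.1.symm)
  have hset : strip α β γ ∪ strip α γ δ = strip β γ δ ∪ strip α β δ := by
    ext i
    have k := key i
    have d1 := Finset.disjoint_left.mp hdis1
    have d2 := Finset.disjoint_left.mp hdis2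
    simp only [Finset.mem_union]
    by_cases h1 : i ∈ strip α β γ <;> by_cases h2 : i ∈ strip α γ δ <;>
      by_cases h3 : i ∈ strip β γ δ <;> by_cases h4 : i ∈ strip α β δ <;>
      tauto
  constructor
  · intro i
    have k := key i
    have d1 := Finset.disjoint_left.mp hdis1
    have d2 := Finset.disjoint_left.mp hdis2
    by_cases h1 : i ∈ strip α β γ <;> by_cases h2 : i ∈ strip α γ δ <;>
      by_cases h3 : i ∈ strip β γ δ <;> by_cases h4 : i ∈ strip α β δ <;>
      simp [h1, h2, h3, h4] <;> tauto
  · rw [← Finset.prod_union hdis1, ← Finset.prod_union hdis2, hset]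
end

section
/- Let 𝒱 be a polarized arrangement, b ∈ 𝔹 a basis, and α ∈ {+1,−1}^I any sign vector. Then the point H^∨_{b^c} of the Gale dual arrangement (the unique point of V^⊥_{η^∨} whose coordinates vanish on b^c = I∖b) lies in Δ^∨_α if and only if α ∈ ℬ_b, i.e., α(i) = μ(b)(i) for all i ∈ b. -/
open Finset

variable {I : Type*} [Fintype I]

private lemma neg_dir {I : Type*} [Fintype I] (A : PolArr I) (b : Finset I)
    (β : I → ℝ) (hβs : IsSign β) (q : I → ℝ) (hqF : q ∈ Flat A.V A.η ↑b)
    (hqD : q ∈ Delta A.V A.η β)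
    (hopt : ∀ x ∈ Delta A.V A.η β, x ≠ q → dot A.ξ (x - q) < 0)
    (hqpos : ∀ j, j ∉ b → 0 < β j * q j)
    (v : I → ℝ) (hvV : v ∈ A.V) (hvb : ∀ j ∈ b, 0 ≤ β j * v j) (hv0 : v ≠ 0) :
    dot A.ξ v < 0 := by
  obtain ⟨i₀, hi₀⟩ := Function.ne_iff.mp hv0
  have hne : Nonempty I := ⟨i₀⟩
  classical
  set g : I → ℝ := fun j => if j ∈ b then 1 else (β j * q j) / (|v j| + 1) with hg
  have hgpos : ∀ j, 0 < g j := by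
    intro j
    by_cases hj : j ∈ b
    · simp [hg, hj]
    · simp only [hg, hj, if_false]
      exact div_pos (hqpos j hj) (by positivity)
  set t : ℝ := Finset.univ.inf' Finset.univ_nonempty g with htdef
  have ht : 0 < t := by
    rw [htdef, Finset.lt_inf'_iff]
    exact fun j _ => hgpos j
  have htle : ∀ j, t ≤ g j := fun j => Finset.inf'_le g (Finset.mem_univ j)
  have habs : ∀ j, |β j| = 1 := by
    intro j; rcases hβs j with h | h <;> simp [h]
  have hmem : q + t • v ∈ Delta A.V A.η β := by
    constructor
    · have : q + t • v - A.η = (q - A.η) + t • v := by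
        abel
      rw [this]
      exact A.V.add_mem hqF.1 (A.V.smul_mem t hvV)
    · intro j
      have hval : (q + t • v) j = q j + t * v j := rfl
      rw [hval]
      by_cases hj : j ∈ b
      · have hq0 : q j = 0 := hqF.2 j hj
        have := hvb j hj
        rw [hq0]
        nlinarith [ht.le]
      · have h1 : 0 < β j * q j := hqpos j hj
        have h2 : t ≤ (β j * q j) / (|v j| + 1) := by
          have := htle j; simpa [hg, hj] using this
        have h3 : t * (|v j| + 1) ≤ β j * q j := by
          rw [← le_div_iff₀ (by positivity)]; exact h2
        have h4 : -|v j| ≤ β j * v j := by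
          have : |β j * v j| = |v j| := by rw [abs_mul, habs j, one_mul]
          linarith [neg_abs_le (β j * v j), this.le, this.ge]
        have h5 : 0 ≤ |v j| := abs_nonneg _
        nlinarith
  have hneq : q + t • v ≠ q := by
    intro h
    have := congrFun h i₀
    have hv' : (q + t • v) i₀ = q i₀ + t * v i₀ := rfl
    rw [hv'] at this
    have : t * v i₀ = 0 := by linarith
    rcases mul_eq_zero.mp this with h' | h'
    · exact ht.ne' h'
    · exact hi₀ h'
  have := hopt (q + t • v) hmem hneq
  have hsub : q + t • v - q = t • v := by abel
  rw [hsub] at this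
  have hdot : dot A.ξ (t • v) = t * dot A.ξ v := by
    simp [dot, Finset.mul_sum]
    ring_nf
    congr 1; ext j; ring
  rw [hdot] at this
  nlinarith

private lemma dot_split {I : Type*} [Fintype I] (x y v : I → ℝ) :
    dot (x + y) v = dot x v + dot y v := by
  simp [dot, add_mul, Finset.sum_add_distrib]

/-- The point `H^∨_{bᶜ}` of the Gale dual arrangement `𝒱^∨ = (V^⊥, -ξ, -η)` lies in the
dual chamber `Δ^∨_α` if and only if `α ∈ ℬ_b`, i.e. `α` agrees with `μ(b)` in every
coordinate `i ∈ b`. -/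
theorem dual_point_in_chamber_iff [DecidableEq I] (A : PolArr I) (b : Finset I)
    (hb : IsBasisSet A.V A.η b) (β : I → ℝ) (hβs : IsSign β)
    (hμb : MuSpec A.V A.η A.ξ b β) (α : I → ℝ) (hαs : IsSign α)
    (p : I → ℝ) (hp : p ∈ Flat (perp A.V) (-A.ξ) (↑bᶜ : Set I)) :
    p ∈ Delta (perp A.V) (-A.ξ) α ↔ ∀ i ∈ b, α i = β i := by
  classical
  obtain ⟨hb_card, -⟩ := hb
  obtain ⟨-, -, q, hqF, hqD, hopt⟩ := hμb
  -- q is nonzero off b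
  have hq0b : ∀ j ∈ b, q j = 0 := fun j hj => hqF.2 j hj
  have hqne : ∀ j, j ∉ b → q j ≠ 0 := by
    have hsub : {j | q j ≠ 0} ⊆ (↑(bᶜ) : Set I) := by
      intro j hj
      simp only [Finset.coe_compl, Set.mem_compl_iff, Finset.mem_coe]
      intro hjb
      exact hj (hq0b j hjb)
    have hcard : (↑(bᶜ) : Set I).ncard ≤ {j | q j ≠ 0}.ncard := by
      rw [Set.ncard_coe_finset, Finset.card_compl, hb_card]
      exact A.cond_a q hqF.1
    have heq := Set.eq_of_subset_of_ncard_le hsub hcard (Set.toFinite _)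
    intro j hj
    have : j ∈ (↑(bᶜ) : Set I) := by
      simp only [Finset.coe_compl, Set.mem_compl_iff, Finset.mem_coe]; exact hj
    rw [← heq] at this
    exact this
  have hqpos : ∀ j, j ∉ b → 0 < β j * q j := by
    intro j hj
    rcases lt_or_eq_of_le (hqD.2 j) with h | h
    · exact h
    · exfalso
      rcases mul_eq_zero.mp h.symm with h' | h'
      · rcases hβs j with hb' | hb' <;> rw [hb'] at h' <;> norm_num at h'
      · exact hqne j hj h'
  -- the restriction map to b
  set f : A.V →ₗ[ℝ] (↥b → ℝ) :=
    (LinearMap.funLeft ℝ ℝ (fun j : ↥b => (j : I))).comp A.V.subtype with hf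
  have hfapp : ∀ (v : A.V) (j : ↥b), f v j = (v : I → ℝ) (j : I) := fun _ _ => rfl
  have hinj : Function.Injective f := by
    rw [← LinearMap.ker_eq_bot, LinearMap.ker_eq_bot']
    intro v hv
    by_contra hv0
    have hvne : (v : I → ℝ) ≠ 0 := fun h => hv0 (Subtype.ext h)
    have hzero : ∀ j ∈ b, (v : I → ℝ) j = 0 := by
      intro j hj
      have := congrFun hv (⟨j, hj⟩ : ↥b)
      simpa [hfapp] using this
    have h1 := neg_dir A b β hβs q hqF hqD hopt hqpos (v : I → ℝ) v.2
      (fun j hj => by rw [hzero j hj, mul_zero]) hvne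
    have h2 := neg_dir A b β hβs q hqF hqD hopt hqpos (-(v : I → ℝ))
      (A.V.neg_mem v.2) (fun j hj => by simp [hzero j hj]) (by simpa using hvne)
    have : dot A.ξ (-(v : I → ℝ)) = -dot A.ξ (v : I → ℝ) := by
      simp [dot]
    rw [this] at h2
    linarith
  have hfr : Module.finrank ℝ A.V = Module.finrank ℝ (↥b → ℝ) := by
    rw [Module.finrank_fintype_fun_eq_card, Fintype.card_coe, hb_card]
  have hsurj : Function.Surjective f :=
    (LinearMap.injective_iff_surjective_of_finrank_eq_finrank hfr).mp hinj
  have hp1 : p + A.ξ ∈ perp A.V := by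
    have := hp.1
    rwa [sub_neg_eq_add] at this
  have hp0 : ∀ j, j ∉ b → p j = 0 := by
    intro j hj
    exact hp.2 j (by simp [hj])
  -- key: β i * p i > 0 for i ∈ b
  have hkey : ∀ i ∈ b, 0 < β i * p i := by
    intro i hi
    obtain ⟨v, hv⟩ := hsurj (fun j : ↥b => if (j : I) = i then β i else 0)
    have hvi : (v : I → ℝ) i = β i := by
      have := congrFun hv (⟨i, hi⟩ : ↥b)
      simpa [hfapp] using this
    have hvz : ∀ j ∈ b, j ≠ i → (v : I → ℝ) j = 0 := by
      intro j hj hji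
      have := congrFun hv (⟨j, hj⟩ : ↥b)
      simpa [hfapp, hji] using this
    have hβi : β i ≠ 0 := by
      rcases hβs i with h | h <;> rw [h] <;> norm_num
    have hvne : (v : I → ℝ) ≠ 0 := by
      intro h
      exact hβi (by rw [← hvi, h]; rfl)
    have hvb : ∀ j ∈ b, 0 ≤ β j * (v : I → ℝ) j := by
      intro j hj
      by_cases hji : j = i
      · subst hji
        rw [hvi]
        rcases hβs j with h | h <;> rw [h] <;> norm_num
      · rw [hvz j hj hji, mul_zero]
    have hneg := neg_dir A b β hβs q hqF hqD hopt hqpos (v : I → ℝ) v.2 hvb hvne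
    have hperp : dot (p + A.ξ) (v : I → ℝ) = 0 := hp1 (v : I → ℝ) v.2
    rw [dot_split] at hperp
    have hdotp : dot p (v : I → ℝ) = p i * β i := by
      rw [dot]
      rw [Finset.sum_eq_single i]
      · rw [hvi]
      · intro j _ hji
        by_cases hj : j ∈ b
        · rw [hvz j hj hji, mul_zero]
        · rw [hp0 j hj, zero_mul]
      · intro h; exact absurd (Finset.mem_univ i) h
    rw [hdotp] at hperp
    nlinarith
  constructor
  · intro hpD i hi
    have h1 := hpD.2 i
    have h2 := hkey i hi
    rcases hαs i with ha | ha <;> rcases hβs i with hb' | hb' <;>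
      rw [ha, hb'] <;> rw [ha] at h1 <;> rw [hb'] at h2 <;> nlinarith
  · intro hab
    refine ⟨hp.1, fun i => ?_⟩
    by_cases hi : i ∈ b
    · rw [hab i hi]
      exact (hkey i hi).le
    · rw [hp0 i hi, mul_zero]
end
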